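/- arXiv:1804.09485 — 2 statements merged into one kernel-verified Lean document; each statement's English description precedes it below -/
import Mathlib

section
/- For any odd prime p with n = (p-1)/2, the double sum S_1 = sum over i,j from 0 to n of S(i,j) is congruent to 2*(-1)^n - (p/3) modulo p. -/
/-!
Summing the recurrence `S(i+1,j) + S(i,j+1) = 4 S(i,j)` over the square `[0,n]²` telescopes,
by the symmetry of `S`, to `∑ S(i,j) + ∑_{k ≤ n} C(2k,k) = ∑_{j ≤ n} S(n+1,j)`.
Modulo `p = 2n+1` one has `C(2k,k) ≡ (-4)^k C(n,k)` for `k ≤ n`, so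
`∑_{k ≤ n} C(2k,k) ≡ (-3)^n`, which is `(p/3)` by Euler's criterion and quadratic reciprocity.
On the right, `S(n+1,j) ≡ 0` for `j < n` since `p ∣ C(2n+2,n+1)`, while
`S(n+1,n) = 2 C(2n,n) ≡ 2(-4)^n ≡ 2(-1)^n`.
-/

open Finset Nat

/-- The super Catalan numbers `S(m,n) = C(2m,m)·C(2n,n)/C(m+n,m)` (the division is exact). -/
def superCatalan (m n : ℕ) : ℕ :=
  (Nat.choose (2 * m) m * Nat.choose (2 * n) n) / Nat.choose (m + n) m

-- The rational recurrence shows by induction that this is a natural number, which is what makes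
-- the division in `superCatalan` exact.
def superCatalanRat (i j : ℕ) : ℚ := (2 * i)! * (2 * j)! / (i ! * j ! * (i + j)!)

theorem superCatalanRat_succ_left_add_succ_right (i j : ℕ) :
    superCatalanRat (i + 1) j + superCatalanRat i (j + 1) = 4 * superCatalanRat i j := by
  simp only [superCatalanRat, Nat.mul_succ, add_right_comm i 1 j, ← add_assoc, Nat.factorial_succ]
  push_cast
  field_simp
  ring

theorem superCatalanRat_mul_choose (i j : ℕ) :
    superCatalanRat i j * (i + j).choose i = centralBinom i * centralBinom j := by
  simp only [superCatalanRat, centralBinom_eq_two_mul_choose]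
  rw [Nat.cast_choose ℚ (by omega), Nat.cast_choose ℚ (by omega),
    Nat.cast_choose ℚ (by omega)]
  simp only [show 2 * i - i = i by omega, show 2 * j - j = j by omega, Nat.add_sub_cancel_left]
  field_simp

theorem superCatalanRat_zero_left (j : ℕ) : superCatalanRat 0 j = centralBinom j := by
  simpa using superCatalanRat_mul_choose 0 j

theorem superCatalanRat_nonneg (i j : ℕ) : 0 ≤ superCatalanRat i j := by
  unfold superCatalanRat; positivity

theorem exists_natCast_eq_superCatalanRat (i j : ℕ) : ∃ m : ℕ, superCatalanRat i j = m := by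
  induction i generalizing j with
  | zero => exact ⟨centralBinom j, superCatalanRat_zero_left j⟩
  | succ i ih =>
    obtain ⟨a, ha⟩ := ih j
    obtain ⟨b, hb⟩ := ih (j + 1)
    have hrec := superCatalanRat_succ_left_add_succ_right i j
    have hba : (b : ℚ) ≤ 4 * a := by
      linarith [superCatalanRat_nonneg (i + 1) j]
    refine ⟨4 * a - b, ?_⟩
    rw [Nat.cast_sub (by exact_mod_cast hba)]
    push_cast
    linarith

theorem choose_dvd_centralBinom_mul (i j : ℕ) :
    (i + j).choose i ∣ centralBinom i * centralBinom j := by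
  obtain ⟨m, hm⟩ := exists_natCast_eq_superCatalanRat i j
  refine ⟨m, ?_⟩
  have h := superCatalanRat_mul_choose i j
  rw [hm, mul_comm] at h
  exact_mod_cast h.symm

theorem superCatalan_mul_choose (i j : ℕ) :
    superCatalan i j * (i + j).choose i = centralBinom i * centralBinom j :=
  Nat.div_mul_cancel (choose_dvd_centralBinom_mul i j)

theorem cast_superCatalan (i j : ℕ) : (superCatalan i j : ℚ) = superCatalanRat i j := by
  have h : ((i + j).choose i : ℚ) ≠ 0 := by exact_mod_cast (Nat.choose_pos (by omega)).ne'
  apply mul_right_cancel₀ h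
  rw [superCatalanRat_mul_choose]
  exact_mod_cast superCatalan_mul_choose i j

theorem superCatalan_succ_left_add_succ_right (i j : ℕ) :
    superCatalan (i + 1) j + superCatalan i (j + 1) = 4 * superCatalan i j := by
  have h := superCatalanRat_succ_left_add_succ_right i j
  simp only [← cast_superCatalan] at h
  exact_mod_cast h

theorem superCatalan_zero_left (j : ℕ) : superCatalan 0 j = centralBinom j := by
  simp [superCatalan, centralBinom_eq_two_mul_choose]

theorem superCatalan_comm (i j : ℕ) : superCatalan i j = superCatalan j i := by
  rw [superCatalan, superCatalan, mul_comm, add_comm, Nat.choose_symm_add]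

theorem centralBinom_succ_eq_two_mul_choose (m : ℕ) :
    centralBinom (m + 1) = 2 * (2 * m + 1).choose (m + 1) := by
  rw [centralBinom_eq_two_mul_choose, show 2 * (m + 1) = 2 * m + 1 + 1 by ring,
    Nat.choose_succ_succ, Nat.choose_symm_half, ← two_mul]

theorem superCatalan_succ_self (m : ℕ) : superCatalan (m + 1) m = 2 * centralBinom m := by
  have h := superCatalan_mul_choose (m + 1) m
  rw [show m + 1 + m = 2 * m + 1 by ring, centralBinom_succ_eq_two_mul_choose] at h
  apply Nat.eq_of_mul_eq_mul_right (Nat.choose_pos (by omega : m + 1 ≤ 2 * m + 1))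
  rw [h]; ring

theorem sum_superCatalan_square_add_sum_centralBinom (n : ℕ) :
    ∑ i ∈ range (n + 1), ∑ j ∈ range (n + 1), superCatalan i j
        + ∑ k ∈ range (n + 1), centralBinom k
      = ∑ j ∈ range (n + 1), superCatalan (n + 1) j := by
  set Q := ∑ i ∈ range (n + 1), ∑ j ∈ range (n + 1), superCatalan i j
  have hrows : ∑ i ∈ range (n + 1), ∑ j ∈ range (n + 1), superCatalan (i + 1) j
      + ∑ k ∈ range (n + 1), centralBinom k
        = Q + ∑ j ∈ range (n + 1), superCatalan (n + 1) j := by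
    have h := (sum_range_succ' (fun i ↦ ∑ j ∈ range (n + 1), superCatalan i j) (n + 1)).symm
      |>.trans (sum_range_succ _ (n + 1))
    simpa only [superCatalan_zero_left] using h
  have hcols : ∑ i ∈ range (n + 1), ∑ j ∈ range (n + 1), superCatalan i (j + 1)
      + ∑ k ∈ range (n + 1), centralBinom k
        = Q + ∑ j ∈ range (n + 1), superCatalan (n + 1) j := by
    have h (i : ℕ) := (sum_range_succ' (fun j ↦ superCatalan i j) (n + 1)).symm.trans
      (sum_range_succ _ (n + 1))
    simp only [superCatalan_comm _ 0, superCatalan_comm _ (n + 1), superCatalan_zero_left] at h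
    rw [← sum_add_distrib, sum_congr rfl fun i _ ↦ h i, sum_add_distrib]
  have h4 : 4 * Q = ∑ i ∈ range (n + 1), ∑ j ∈ range (n + 1), superCatalan (i + 1) j
      + ∑ i ∈ range (n + 1), ∑ j ∈ range (n + 1), superCatalan i (j + 1) := by
    simp only [Q, mul_sum, ← superCatalan_succ_left_add_succ_right, sum_add_distrib]
  omega

theorem ZMod.natCast_ne_zero_of_pos_of_lt {m k : ℕ} (hk0 : 0 < k) (hk : k < m) :
    (k : ZMod m) ≠ 0 := by
  rw [Ne, ZMod.natCast_eq_zero_iff]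
  exact Nat.not_dvd_of_pos_of_lt hk0 hk

section OddPrime

variable {n : ℕ} [Fact (2 * n + 1).Prime]

theorem centralBinom_cast_eq_neg_four_pow_mul_choose {k : ℕ} (hk : k ≤ n) :
    (centralBinom k : ZMod (2 * n + 1)) = (-4) ^ k * n.choose k := by
  have hzero : (2 * n + 1 : ZMod (2 * n + 1)) = 0 := by
    exact_mod_cast ZMod.natCast_self (2 * n + 1)
  induction k with
  | zero => simp
  | succ k ih =>
    have hcb : ((k : ZMod (2 * n + 1)) + 1) * centralBinom (k + 1)
        = 2 * (2 * k + 1) * centralBinom k := by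
      exact_mod_cast congrArg (Nat.cast : ℕ → ZMod (2 * n + 1)) (succ_mul_centralBinom_succ k)
    have hchoose : (n.choose (k + 1) : ZMod (2 * n + 1)) * (k + 1) = n.choose k * (n - k) := by
      rw [← Nat.cast_sub (by omega)]
      exact_mod_cast congrArg (Nat.cast : ℕ → ZMod (2 * n + 1)) (choose_succ_right_eq n k)
    apply mul_left_cancel₀ (ZMod.natCast_ne_zero_of_pos_of_lt (k := k + 1) (by omega) (by omega))
    push_cast
    linear_combination hcb + 2 * (2 * k + 1) * ih (by omega) - (-4) ^ (k + 1) * hchoose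
      + 2 * (-4) ^ k * (n.choose k : ZMod (2 * n + 1)) * hzero

theorem sum_range_centralBinom_cast_eq_neg_three_pow :
    ∑ k ∈ range (n + 1), (centralBinom k : ZMod (2 * n + 1)) = (-3) ^ n := by
  rw [show (-3 : ZMod (2 * n + 1)) = -4 + 1 by norm_num, add_pow]
  refine sum_congr rfl fun k hk ↦ ?_
  rw [centralBinom_cast_eq_neg_four_pow_mul_choose (by simp at hk; omega), one_pow, mul_one]

theorem centralBinom_cast_eq_neg_one_pow : (centralBinom n : ZMod (2 * n + 1)) = (-1) ^ n := by
  have h2 : (2 : ZMod (2 * n + 1)) ≠ 0 := by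
    have := (Fact.out : (2 * n + 1).Prime).two_le
    exact_mod_cast ZMod.natCast_ne_zero_of_pos_of_lt (m := 2 * n + 1) (k := 2) (by omega) (by omega)
  have hfermat := ZMod.pow_card_sub_one_eq_one h2
  rw [Nat.add_sub_cancel, pow_mul] at hfermat
  rw [centralBinom_cast_eq_neg_four_pow_mul_choose le_rfl, Nat.choose_self, Nat.cast_one, mul_one,
    show (-4 : ZMod (2 * n + 1)) = -1 * 2 ^ 2 by norm_num, mul_pow, hfermat, mul_one]

theorem superCatalan_succ_cast_eq_zero {j : ℕ} (hj : j < n) :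
    (superCatalan (n + 1) j : ZMod (2 * n + 1)) = 0 := by
  have hp : (2 * n + 1).Prime := Fact.out
  have hcb : (centralBinom (n + 1) : ZMod (2 * n + 1)) = 0 := by
    rw [ZMod.natCast_eq_zero_iff, centralBinom_eq_two_mul_choose, two_mul (n + 1)]
    exact hp.dvd_choose_add (a := n + 1) (b := n + 1) (by omega) (by omega) (by omega)
  have hchoose : ((n + 1 + j).choose (n + 1) : ZMod (2 * n + 1)) ≠ 0 := by
    rw [Ne, ZMod.natCast_eq_zero_iff, ← hp.coprime_iff_not_dvd]
    exact hp.coprime_choose_of_lt (a := n + 1) (b := n + 1 + j) (by omega) (by omega)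
  have h := congrArg (Nat.cast : ℕ → ZMod (2 * n + 1)) (superCatalan_mul_choose (n + 1) j)
  push_cast at h
  rw [hcb, zero_mul] at h
  exact (mul_eq_zero.mp h).resolve_right hchoose

theorem sum_range_superCatalan_succ_cast_eq_two_mul_neg_one_pow :
    ∑ j ∈ range (n + 1), (superCatalan (n + 1) j : ZMod (2 * n + 1)) = 2 * (-1) ^ n := by
  rw [sum_range_succ, sum_eq_zero fun j hj ↦ superCatalan_succ_cast_eq_zero (by simpa using hj),
    zero_add, superCatalan_succ_self, Nat.cast_mul, Nat.cast_two, centralBinom_cast_eq_neg_one_pow]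

end OddPrime

theorem legendreSym_three_eq_neg_three_pow {p : ℕ} [Fact p.Prime] (hp : p ≠ 2) :
    (legendreSym 3 p : ZMod p) = (-3) ^ (p / 2) := by
  have : Fact (Nat.Prime 3) := ⟨Nat.prime_three⟩
  rw [legendreSym.quadratic_reciprocity' hp (by decide)]
  push_cast
  rw [legendreSym.eq_pow]
  norm_num [← mul_pow]

theorem stmt13 (p : ℕ) (hp : p.Prime) (hodd : Odd p) :
    (↑(∑ i ∈ Finset.range ((p - 1) / 2 + 1), ∑ j ∈ Finset.range ((p - 1) / 2 + 1),
          superCatalan i j) : ZMod p) =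
      2 * (-1 : ZMod p) ^ ((p - 1) / 2) - (legendreSym 3 p : ZMod p) := by
  have := Fact.mk hp
  obtain ⟨n, rfl⟩ := hodd
  rw [legendreSym_three_eq_neg_three_pow (by omega), show (2 * n + 1) / 2 = n by omega,
    show (2 * n + 1 - 1) / 2 = n by omega,
    ← sum_range_superCatalan_succ_cast_eq_two_mul_neg_one_pow,
    ← sum_range_centralBinom_cast_eq_neg_three_pow, eq_sub_iff_add_eq]
  exact_mod_cast congrArg (Nat.cast : ℕ → ZMod (2 * n + 1))
    (sum_superCatalan_square_add_sum_centralBinom n)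
end

section
/- For any odd prime p with n = (p-1)/2, the sum over i from 0 to n and j from n+1 to 2n of (i+j)*S(i,j) is congruent to 2*(-1)^n - (8/3)*(p/3) modulo p (for p ≥ 5, with 1/3 the inverse of 3 mod p). -/
/-!
For `j = p - a` with `1 ≤ a ≤ n`, the numerator `(2i)! (2j)!` of `S(i, j)` is divisible by `p`
exactly once, while the denominator `i! j! (i + j)!` is divisible by `p` only when `i ≥ a`. Hence
`S(i, j) ≡ 0` for `i < a`, and otherwise Wilson's theorem and `C(2i, i) ≡ (-4)^i C(n, i)` give
`(i + j) S(i, j) ≡ c_a C(n, i) C(i, a + 1) (-4)^i` with `c_a` independent of `i`. The identity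
`∑ C(n, i) C(i, k) x^i = C(n, k) x^k (1 + x)^(n - k)` evaluates the sum over `i` to
`(-1)^a 4 (2a + 1) (-3)^(n - a - 1)`; the sum over `a` is then an arithmetic-geometric sum in `3`,
and `(-3)^n ≡ (-3 / p) = (p / 3)`.
-/

open Finset

open Nat

lemma div_add_div_add_add_div_le (d m n : ℕ) :
    m / d + n / d + (m + n) / d ≤ 2 * m / d + 2 * n / d := by
  rcases Nat.eq_zero_or_pos d with rfl | hd
  · simp
  rw [Nat.add_div hd, two_mul, two_mul, Nat.add_div hd, Nat.add_div hd]
  have := Nat.mod_lt m hd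
  have := Nat.mod_lt n hd
  split_ifs <;> omega

/-- Legendre's formula reduces this to `⌊x⌋ + ⌊y⌋ + ⌊x + y⌋ ≤ ⌊2x⌋ + ⌊2y⌋`. -/
lemma factorial_mul_factorial_mul_factorial_add_dvd (m n : ℕ) :
    m ! * n ! * (m + n)! ∣ (2 * m)! * (2 * n)! := by
  rw [← Nat.factorization_le_iff_dvd (by positivity) (by positivity)]
  intro q
  by_cases hq : q.Prime
  · have : Fact q.Prime := ⟨hq⟩
    simp only [Nat.factorization_mul (factorial_ne_zero _) (factorial_ne_zero _),
      Nat.factorization_mul (mul_ne_zero (factorial_ne_zero _) (factorial_ne_zero _))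
        (factorial_ne_zero _), Finsupp.coe_add, Pi.add_apply, Nat.factorization_def _ hq]
    have hlog : ∀ k ≤ 2 * (m + n), Nat.log q k < Nat.log q (2 * (m + n)) + 1 :=
      fun k hk => Nat.lt_succ_of_le (Nat.log_mono_right hk)
    rw [padicValNat_factorial (hlog m (by omega)), padicValNat_factorial (hlog n (by omega)),
      padicValNat_factorial (hlog (m + n) (by omega)),
      padicValNat_factorial (hlog (2 * m) (by omega)),
      padicValNat_factorial (hlog (2 * n) (by omega)),
      ← sum_add_distrib, ← sum_add_distrib, ← sum_add_distrib]
    exact sum_le_sum fun i _ => div_add_div_add_add_div_le (q ^ i) m n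
  · simp [Nat.factorization_eq_zero_of_not_prime _ hq]

lemma superCatalan_mul_factorials (m n : ℕ) :
    superCatalan m n * (m ! * n ! * (m + n)!) = (2 * m)! * (2 * n)! := by
  have hN : (2 * m)! * (2 * n)! = (2 * m).choose m * (2 * n).choose n * (m ! * n !) ^ 2 := by
    rw [two_mul, two_mul, ← add_choose_mul_factorial_mul_factorial m m,
      ← add_choose_mul_factorial_mul_factorial n n]
    ring
  have hD : m ! * n ! * (m + n)! = (m + n).choose m * (m ! * n !) ^ 2 := by
    rw [← Nat.choose_mul_factorial_mul_factorial (Nat.le_add_right m n), Nat.add_sub_cancel_left]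
    ring
  have hdvd := factorial_mul_factorial_mul_factorial_add_dvd m n
  rw [hN, hD] at hdvd
  rw [superCatalan, hD, hN, ← mul_assoc,
    Nat.div_mul_cancel (Nat.dvd_of_mul_dvd_mul_right (by positivity) hdvd)]

lemma sum_choose_mul_choose_mul_pow {R : Type*} [CommSemiring R] (n k : ℕ) (x : R) :
    ∑ i ∈ range (n + 1), (n.choose i * i.choose k : R) * x ^ i
      = n.choose k * x ^ k * (1 + x) ^ (n - k) := by
  rcases le_or_gt k n with hkn | hnk
  · rw [show n + 1 = k + (n - k + 1) by omega, sum_range_add,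
      sum_eq_zero fun i hi => by simp [choose_eq_zero_of_lt (mem_range.1 hi)], zero_add,
      add_comm 1 x, add_pow, mul_sum]
    refine sum_congr rfl fun m _ => ?_
    have h := congrArg (Nat.cast : ℕ → R) (choose_mul (n := n) (Nat.le_add_right k m))
    rw [Nat.add_sub_cancel_left] at h
    push_cast at h
    rw [h, pow_add, one_pow]
    ring
  · rw [choose_eq_zero_of_lt hnk, Nat.cast_zero, zero_mul, zero_mul]
    exact sum_eq_zero fun i hi => by
      simp [choose_eq_zero_of_lt (lt_of_le_of_lt (mem_range_succ_iff.1 hi) hnk)]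

lemma sq_sub_one_mul_sum_range_mul_pow {R : Type*} [CommRing R] (x : R) (m : ℕ) :
    (x - 1) ^ 2 * ∑ b ∈ range m, (b : R) * x ^ b = (m - 1) * x ^ (m + 1) - m * x ^ m + x := by
  induction m with
  | zero => simp
  | succ m ih =>
    rw [sum_range_succ, mul_add, ih]
    push_cast
    ring

lemma factorial_mul_factorial_mul_centralBinom {a : ℕ} (ha : 1 ≤ a) :
    (a + 1)! * (a - 1)! * centralBinom (a + 1) = 4 * (2 * a + 1) * (2 * a - 1)! := by
  obtain ⟨a, rfl⟩ : ∃ c, a = c + 1 := ⟨a - 1, by omega⟩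
  rw [Nat.add_sub_cancel, show 2 * (a + 1) - 1 = 2 * a + 1 by omega]
  apply Nat.eq_of_mul_eq_mul_right (factorial_pos (a + 2))
  have h := add_choose_mul_factorial_mul_factorial (a + 2) (a + 2)
  rw [centralBinom_eq_two_mul_choose, two_mul]
  simp only [show a + 2 + (a + 2) = 2 * a + 1 + 3 by ring, factorial_succ] at h ⊢
  linear_combination (a !) * h

lemma choose_succ_mul_factorial_mul_factorial {i a : ℕ} (hai : a ≤ i) :
    i.choose (a + 1) * (a + 1)! * (i - a)! = (i - a) * i ! := by
  rw [factorial_succ, ← choose_mul_factorial_mul_factorial hai]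
  linear_combination (a ! * (i - a)!) * choose_succ_right_eq i a

lemma neg_one_pow_mul_neg_one_pow {R : Type*} [Monoid R] [HasDistribNeg R] (n : ℕ) :
    (-1 : R) ^ n * (-1) ^ n = 1 := by
  rw [← pow_add, ← two_mul, pow_mul, neg_one_sq, one_pow]

lemma cast_two_mul_add_one_eq_zero {p n : ℕ} (hn : 2 * n + 1 = p) : (2 * n + 1 : ZMod p) = 0 := by
  have h : ((2 * n + 1 : ℕ) : ZMod p) = 0 := by rw [hn, ZMod.natCast_self]
  exact_mod_cast h

section ModPrime

variable {p : ℕ} [hp : Fact p.Prime]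

lemma cast_factorial_ne_zero {m : ℕ} (hm : m < p) : (m ! : ZMod p) ≠ 0 := by
  rw [Ne, ZMod.natCast_eq_zero_iff, hp.out.dvd_factorial]
  omega

lemma exists_factorial_add_eq_mul (r : ℕ) :
    ∃ M, (p + r)! = p * M ∧ (M : ZMod p) = -(r ! : ZMod p) := by
  induction r with
  | zero =>
    refine ⟨(p - 1)!, ?_, by simp [ZMod.wilsons_lemma]⟩
    rw [Nat.add_zero, ← Nat.mul_factorial_pred hp.out.ne_zero]
  | succ r ih =>
    obtain ⟨M, hM, hMr⟩ := ih
    refine ⟨(p + r + 1) * M, ?_, ?_⟩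
    · rw [← Nat.add_assoc, Nat.factorial_succ, hM]
      ring
    · push_cast
      rw [hMr, ZMod.natCast_self, Nat.factorial_succ]
      push_cast
      ring

lemma cast_factorial_sub_mul_factorial_pred {a : ℕ} (ha : 1 ≤ a) (hap : a ≤ p) :
    ((p - a)! * (a - 1)! : ZMod p) = (-1) ^ a := by
  have hdesc := Nat.factorial_mul_descFactorial (show a - 1 ≤ p - 1 by omega)
  rw [show p - 1 - (a - 1) = p - a by omega] at hdesc
  have := congrArg (Nat.cast : ℕ → ZMod p) hdesc
  push_cast at this
  rw [ZMod.cast_descFactorial (by omega), ZMod.wilsons_lemma] at this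
  obtain ⟨b, rfl⟩ : ∃ b, a = b + 1 := ⟨a - 1, by omega⟩
  rw [pow_succ]
  simp only [Nat.add_sub_cancel] at this ⊢
  linear_combination (-1 : ZMod p) ^ b * this
    - ((p - (b + 1))! * b ! : ZMod p) * neg_one_pow_mul_neg_one_pow (R := ZMod p) b

lemma cast_superCatalan_mul_factorials {i j : ℕ} (hj : p ≤ 2 * j) (hij : p ≤ i + j) :
    (superCatalan i j * i ! * j ! * (i + j - p)! : ZMod p) = (2 * i)! * (2 * j - p)! := by
  obtain ⟨M, hM, hMr⟩ := exists_factorial_add_eq_mul (p := p) (2 * j - p)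
  obtain ⟨M', hM', hM'r⟩ := exists_factorial_add_eq_mul (p := p) (i + j - p)
  have h := superCatalan_mul_factorials i j
  rw [show 2 * j = p + (2 * j - p) by omega, show i + j = p + (i + j - p) by omega, hM, hM'] at h
  have hcancel : superCatalan i j * (i ! * j ! * M') = (2 * i)! * M :=
    Nat.eq_of_mul_eq_mul_left hp.out.pos (by linarith)
  have := congrArg (Nat.cast : ℕ → ZMod p) hcancel
  push_cast [hMr, hM'r] at this
  linear_combination -this

lemma cast_superCatalan_eq_zero {i j : ℕ} (hj : p ≤ 2 * j) (hij : i + j < p) :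
    (superCatalan i j : ZMod p) = 0 := by
  have h := congrArg (Nat.cast : ℕ → ZMod p) (superCatalan_mul_factorials i j)
  rw [Nat.cast_mul, Nat.cast_mul (2 * i)!,
    (ZMod.natCast_eq_zero_iff _ p).2 (Nat.dvd_factorial hp.out.pos hj), mul_zero] at h
  refine (mul_eq_zero.1 h).resolve_right ?_
  push_cast
  exact mul_ne_zero (mul_ne_zero (cast_factorial_ne_zero (by omega))
    (cast_factorial_ne_zero (by omega))) (cast_factorial_ne_zero hij)

/-- Modulo `p = 2n + 1` we have `n ≡ -1/2`, so `C(n, i) ≡ (-1/4)^i C(2i, i)`; both sides vanish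
for `n < i < p`. -/
lemma cast_centralBinom {n : ℕ} (hn : 2 * n + 1 = p) {i : ℕ} (hi : i < p) :
    (centralBinom i : ZMod p) = (-4) ^ i * n.choose i := by
  induction i with
  | zero => simp
  | succ i ih =>
    have hi0 : ((i + 1 : ℕ) : ZMod p) ≠ 0 := by
      rw [Ne, ZMod.natCast_eq_zero_iff]
      exact Nat.not_dvd_of_pos_of_lt (by omega) hi
    have hrec := congrArg (Nat.cast : ℕ → ZMod p) (succ_mul_centralBinom_succ i)
    have hchoose := congrArg (Nat.cast : ℕ → ZMod p) (choose_succ_right_eq n i)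
    have hsub : (n.choose i : ZMod p) * (-4 * ((n - i : ℕ) : ZMod p))
        = n.choose i * (2 * (2 * i + 1)) := by
      rcases le_or_gt i n with hin | hni
      · rw [Nat.cast_sub hin]
        linear_combination (-2 * n.choose i : ZMod p) * cast_two_mul_add_one_eq_zero hn
      · simp [choose_eq_zero_of_lt hni]
    push_cast at hrec hchoose hi0 ⊢
    apply mul_left_cancel₀ hi0
    linear_combination hrec + 2 * (2 * (i : ZMod p) + 1) * ih (by omega)
      + 4 * (-4) ^ i * hchoose - (-4) ^ i * hsub

lemma cast_add_mul_superCatalan {i j a : ℕ} (hi : i < p) (ha : 1 ≤ a) (h2a : 2 * a ≤ p)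
    (hja : j + a = p) :
    (((i + j) * superCatalan i j : ℕ) : ZMod p)
      = (-1) ^ a * ((a + 1)! * (a - 1)! * (p - 2 * a)! : ℕ) * centralBinom i
          * i.choose (a + 1) := by
  rcases lt_or_ge i a with hia | hai
  · rw [choose_eq_zero_of_lt (by omega), Nat.cast_mul,
      cast_superCatalan_eq_zero (by omega) (by omega)]
    simp
  have hS := cast_superCatalan_mul_factorials (p := p) (i := i) (j := j) (by omega) (by omega)
  rw [show i + j - p = i - a by omega, show 2 * j - p = p - 2 * a by omega] at hS
  have hW := cast_factorial_sub_mul_factorial_pred (p := p) ha (by omega)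
  rw [show p - a = j by omega] at hW
  have hC := congrArg (Nat.cast : ℕ → ZMod p) (add_choose_mul_factorial_mul_factorial i i)
  have hN := congrArg (Nat.cast : ℕ → ZMod p) (choose_succ_mul_factorial_mul_factorial hai)
  have hij : ((i + j : ℕ) : ZMod p) = ((i - a : ℕ) : ZMod p) := by
    rw [show i + j = (i - a) + p by omega, Nat.cast_add, ZMod.natCast_self, add_zero]
  rw [← two_mul] at hC
  rw [centralBinom_eq_two_mul_choose, Nat.cast_mul, hij]
  push_cast at hC hN hS ⊢
  have hne : (i ! * j ! * (i - a)! : ZMod p) ≠ 0 :=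
    mul_ne_zero (mul_ne_zero (cast_factorial_ne_zero hi) (cast_factorial_ne_zero (by omega)))
      (cast_factorial_ne_zero (by omega))
  apply mul_right_cancel₀ hne
  linear_combination (i - a : ℕ) * hS - ((i - a : ℕ) * (p - 2 * a)! : ZMod p) * hC
    - ((-1) ^ a * (a - 1)! * j ! * (p - 2 * a)! * (2 * i).choose i * i ! : ZMod p) * hN
    - ((-1) ^ a * (p - 2 * a)! * (2 * i).choose i * i ! * (i - a : ℕ) * i ! : ZMod p) * hW
    - ((p - 2 * a)! * (2 * i).choose i * i ! * (i - a : ℕ) * i ! : ZMod p)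
      * neg_one_pow_mul_neg_one_pow (R := ZMod p) a

lemma sum_cast_add_mul_superCatalan {n j a : ℕ} (hn : 2 * n + 1 = p) (ha : 1 ≤ a) (han : a ≤ n)
    (hja : j + a = p) :
    ∑ i ∈ range (n + 1), (((i + j) * superCatalan i j : ℕ) : ZMod p)
      = (-1) ^ a * (4 * (2 * a + 1)) * (-3) ^ (n - a - 1) := by
  set K : ZMod p := (-1) ^ a * ((a + 1)! * (a - 1)! * (p - 2 * a)! : ℕ)
  have hW := cast_factorial_sub_mul_factorial_pred (p := p) (a := 2 * a) (by omega) (by omega)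
  rw [pow_mul, neg_one_sq, one_pow] at hW
  have hK := congrArg (Nat.cast : ℕ → ZMod p) (factorial_mul_factorial_mul_centralBinom ha)
  push_cast at hK
  calc ∑ i ∈ range (n + 1), (((i + j) * superCatalan i j : ℕ) : ZMod p)
      = K * ∑ i ∈ range (n + 1), (n.choose i * i.choose (a + 1) : ZMod p) * (-4) ^ i := by
        rw [mul_sum]
        refine sum_congr rfl fun i hi => ?_
        rw [mem_range] at hi
        rw [cast_add_mul_superCatalan (by omega) ha (by omega) hja,
          cast_centralBinom hn (by omega)]
        ring
    _ = K * centralBinom (a + 1) * (-3) ^ (n - a - 1) := by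
        rw [sum_choose_mul_choose_mul_pow, cast_centralBinom hn (by omega), Nat.sub_sub,
          show (1 : ZMod p) + -4 = -3 by norm_num]
        ring
    _ = (-1) ^ a * (4 * (2 * a + 1)) * (-3) ^ (n - a - 1) := by
        simp only [K]
        push_cast
        linear_combination ((-1) ^ a * (-3) ^ (n - a - 1) * (p - 2 * a)! : ZMod p) * hK
          + ((-1) ^ a * (4 * (2 * a + 1)) * (-3) ^ (n - a - 1) : ZMod p) * hW

/-- The factor `3` clears the exponent `b - 1` (truncated at `b = 0`) of the previous lemma. -/
lemma three_mul_sum_cast_add_mul_superCatalan {n b : ℕ} (hn : 2 * n + 1 = p) (hb : b < n) :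
    3 * ∑ i ∈ range (n + 1), (((i + (n + 1 + b)) * superCatalan i (n + 1 + b) : ℕ) : ZMod p)
      = 8 * (-1) ^ n * (b * 3 ^ b) := by
  rw [sum_cast_add_mul_superCatalan hn (a := n - b) (by omega) (by omega) (by omega)]
  obtain ⟨a, rfl⟩ : ∃ a, n = b + a := ⟨n - b, by omega⟩
  have h2n := cast_two_mul_add_one_eq_zero hn
  rw [Nat.add_sub_cancel_left, show b + a - a - 1 = b - 1 by omega]
  rcases b with _ | c
  · push_cast at h2n ⊢
    linear_combination 12 * (-1 : ZMod p) ^ a * h2n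
  · rw [Nat.add_sub_cancel, neg_pow (3 : ZMod p) c, pow_add, pow_succ _ c]
    push_cast at h2n ⊢
    linear_combination 12 * ((-1) ^ a * (-1) ^ c * 3 ^ c : ZMod p) * h2n

end ModPrime

lemma legendreSym_neg_three {p : ℕ} [Fact p.Prime] (hp2 : p ≠ 2) :
    legendreSym p (-3) = legendreSym 3 p := by
  have : Fact (Nat.Prime 3) := ⟨Nat.prime_three⟩
  have hodd : p % 2 = 1 := (Nat.Prime.mod_two_eq_one_iff_ne_two Fact.out).2 hp2
  have hqr := legendreSym.quadratic_reciprocity' (p := 3) (q := p) (by norm_num) hp2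
  push_cast at hqr
  rw [legendreSym.at_neg hp2, ZMod.χ₄_eq_neg_one_pow hodd, hqr, ← mul_assoc,
    show 3 / 2 * (p / 2) = p / 2 by omega, neg_one_pow_mul_neg_one_pow, one_mul]

theorem stmt18 (p : ℕ) (hp : p.Prime) (hp5 : 5 ≤ p) :
    (↑(∑ i ∈ Finset.range ((p - 1) / 2 + 1),
          ∑ j ∈ Finset.Icc ((p - 1) / 2 + 1) (2 * ((p - 1) / 2)),
            (i + j) * superCatalan i j) : ZMod p) =
      2 * (-1 : ZMod p) ^ ((p - 1) / 2) - (8 * (3 : ZMod p)⁻¹) * (legendreSym 3 p : ZMod p) := by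
  have : Fact p.Prime := ⟨hp⟩
  obtain ⟨n, hn⟩ : ∃ n, 2 * n + 1 = p := ⟨(p - 1) / 2, by have := hp.eq_two_or_odd; omega⟩
  rw [show (p - 1) / 2 = n by omega]
  have h3 : (3 : ZMod p) ≠ 0 := by
    exact_mod_cast (ZMod.natCast_eq_zero_iff 3 p).not.2
      (Nat.not_dvd_of_pos_of_lt (by norm_num) (by omega))
  have hleg := legendreSym.eq_pow p (-3)
  rw [legendreSym_neg_three (by omega), show p / 2 = n by omega] at hleg
  push_cast at hleg
  rw [neg_pow] at hleg
  apply mul_left_cancel₀ h3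
  rw [Nat.cast_sum, sum_congr rfl fun _ _ => Nat.cast_sum _ _, sum_comm,
    ← Ico_add_one_right_eq_Icc, sum_Ico_eq_sum_range, show 2 * n + 1 - (n + 1) = n by omega,
    mul_sum, sum_congr rfl fun b hb =>
      three_mul_sum_cast_add_mul_superCatalan hn (mem_range.1 hb), ← mul_sum]
  linear_combination 2 * (-1) ^ n * sq_sub_one_mul_sum_range_mul_pow (3 : ZMod p) n + 8 * hleg
    + (8 * legendreSym 3 p : ZMod p) * mul_inv_cancel₀ h3
    + (2 * (-1) ^ n * 3 ^ n : ZMod p) * cast_two_mul_add_one_eq_zero hn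
end
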